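/- arXiv:1708.02753 — 2 statements merged into one kernel-verified Lean document; each statement's English description precedes it below -/
import Mathlib

section
/- Let T>0, K>0, ρ>0 and A ∈ C([0,T];C¹_b(ℝ³;ℝ³)). There exists a constant C>0 depending only on T, ρ, K and ‖A‖_{L²(0,T;C¹_b)} such that for any two fields B, B̃ ∈ C([0,T];C¹_b(ℝ³;ℝ³)) with ‖B‖_{L²(0,T;C¹_b)} ≤ K and ‖B̃‖_{L²(0,T;C¹_b)} ≤ K, the characteristic flows Z and Z̃ of Ẋ = V, V̇ = A(s,X) + V×B(s,X) (resp. with B̃), normalized by Z(t,t,z) = z, satisfy sup_{z∈B_ρ(0)} |Z(s,t,z) − Z̃(s,t,z)| ≤ C ‖B − B̃‖_{L²(0,T;L∞)} for all s,t ∈ [0,T]. -/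
open MeasureTheory Set
open scoped Classical

noncomputable section

abbrev V3 : Type := Fin 3 → ℝ
abbrev Z6 : Type := V3 × V3

def dot3 (a b : V3) : ℝ := ∑ i, a i * b i

def cross3 (a b : V3) : V3 :=
  ![a 1 * b 2 - a 2 * b 1, a 2 * b 0 - a 0 * b 2, a 0 * b 1 - a 1 * b 0]

def enorm3 (x : V3) : ℝ := Real.sqrt (∑ i, (x i) ^ 2)

def enorm6 (z : Z6) : ℝ := Real.sqrt (enorm3 z.1 ^ 2 + enorm3 z.2 ^ 2)

def grad3 (u : V3 → ℝ) (x : V3) : V3 := fun i => fderiv ℝ u x (Pi.single i 1)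

def gradx (f : Z6 → ℝ) (z : Z6) : V3 := grad3 (fun x => f (x, z.2)) z.1

def gradv (f : Z6 → ℝ) (z : Z6) : V3 := grad3 (fun v => f (z.1, v)) z.2

def rhoF (f : Z6 → ℝ) (x : V3) : ℝ := ∫ v : V3, f (x, v)

def psiF (f : Z6 → ℝ) (x : V3) : ℝ := ∫ y : V3, rhoF f y / enorm3 (x - y)

def PhiF (a f : Z6 → ℝ) (x : V3) : ℝ :=
  -∫ y : V3, ∫ w : V3, dot3 ((enorm3 (x - y) ^ 3)⁻¹ • (x - y)) (gradv a (y, w)) * f (y, w)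

def supL2 (T : ℝ) (A : ℝ → V3 → V3) : ℝ :=
  Real.sqrt (∫ τ in (0:ℝ)..T, (⨆ x : V3, enorm3 (A τ x)) ^ 2)

def zeta (T : ℝ) (A : ℝ → V3 → V3) (ρ : ℝ) : ℝ :=
  Real.exp (2 * T) * (ρ + Real.sqrt T * supL2 T A)

def charRHS (A B : ℝ → V3 → V3) (s : ℝ) (z : Z6) : Z6 :=
  (z.2, A s z.1 + cross3 z.2 (B s z.1))

def IsCharFlow (T : ℝ) (A B : ℝ → V3 → V3) (Z : ℝ → ℝ → Z6 → Z6) : Prop :=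
  ∀ t ∈ Icc (0:ℝ) T, ∀ z : Z6, Z t t z = z ∧
    ∀ s ∈ Icc (0:ℝ) T,
      HasDerivWithinAt (fun σ => Z σ t z) (charRHS A B s (Z s t z)) (Icc (0:ℝ) T) s

def FamC1bV (T : ℝ) (A : ℝ → V3 → V3) : Prop :=
  ContinuousOn (fun p : ℝ × V3 => A p.1 p.2) (Icc (0:ℝ) T ×ˢ (univ : Set V3)) ∧
  (∀ t ∈ Icc (0:ℝ) T, ContDiff ℝ 1 (A t)) ∧
  ContinuousOn (fun p : ℝ × V3 => fderiv ℝ (A p.1) p.2) (Icc (0:ℝ) T ×ˢ (univ : Set V3)) ∧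
  ∃ M : ℝ, ∀ t ∈ Icc (0:ℝ) T, ∀ x : V3, enorm3 (A t x) ≤ M ∧ ‖fderiv ℝ (A t) x‖ ≤ M

def FamC1γV (T γ : ℝ) (A : ℝ → V3 → V3) : Prop :=
  FamC1bV T A ∧
  ∃ L : ℝ, ∀ t ∈ Icc (0:ℝ) T, ∀ x y : V3,
    ‖fderiv ℝ (A t) x - fderiv ℝ (A t) y‖ ≤ L * enorm3 (x - y) ^ γ

def FamC1bZ (T : ℝ) (a : ℝ → Z6 → ℝ) : Prop :=
  ContinuousOn (fun p : ℝ × Z6 => a p.1 p.2) (Icc (0:ℝ) T ×ˢ (univ : Set Z6)) ∧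
  (∀ t ∈ Icc (0:ℝ) T, ContDiff ℝ 1 (a t)) ∧
  ContinuousOn (fun p : ℝ × Z6 => fderiv ℝ (a p.1) p.2) (Icc (0:ℝ) T ×ˢ (univ : Set Z6)) ∧
  ∃ M : ℝ, ∀ t ∈ Icc (0:ℝ) T, ∀ z : Z6, |a t z| ≤ M ∧ ‖fderiv ℝ (a t) z‖ ≤ M

def FamC1bZ3 (T : ℝ) (Cc : ℝ → Z6 → V3) : Prop :=
  ContinuousOn (fun p : ℝ × Z6 => Cc p.1 p.2) (Icc (0:ℝ) T ×ˢ (univ : Set Z6)) ∧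
  (∀ t ∈ Icc (0:ℝ) T, ContDiff ℝ 1 (Cc t)) ∧
  ContinuousOn (fun p : ℝ × Z6 => fderiv ℝ (Cc p.1) p.2) (Icc (0:ℝ) T ×ˢ (univ : Set Z6)) ∧
  ∃ M : ℝ, ∀ t ∈ Icc (0:ℝ) T, ∀ z : Z6, enorm3 (Cc t z) ≤ M ∧ ‖fderiv ℝ (Cc t) z‖ ≤ M

def SuppBall {α : Type*} [Zero α] (T r : ℝ) (f : ℝ → Z6 → α) : Prop :=
  ∀ t ∈ Icc (0:ℝ) T, ∀ z : Z6, r < enorm6 z → f t z = 0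

def SuppBall0 {α : Type*} [Zero α] (r : ℝ) (u : Z6 → α) : Prop :=
  ∀ z : Z6, r < enorm6 z → u z = 0

def IsCutoff (r₁ r₂ : ℝ) (χ : Z6 → ℝ) : Prop :=
  ContDiff ℝ 1 χ ∧ HasCompactSupport χ ∧ (∀ z, χ z ∈ Icc (0:ℝ) 1) ∧
  (∀ z : Z6, enorm6 z ≤ r₁ → χ z = 1) ∧ (∀ z : Z6, r₂ < enorm6 z → χ z = 0)

def vlasovRHS (a b : ℝ → Z6 → ℝ) (Cc : ℝ → Z6 → V3) (χ : Z6 → ℝ)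
    (f : ℝ → Z6 → ℝ) (s : ℝ) (z : Z6) : ℝ :=
  dot3 (grad3 (psiF (f s)) z.1) (Cc s z) + χ z * PhiF (a s) (f s) z.1 + b s z

def transportT (A B : ℝ → V3 → V3) (f : ℝ → Z6 → ℝ) (s : ℝ) (z : Z6) : ℝ :=
  dot3 z.2 (gradx (f s) z) + dot3 (A s z.1) (gradv (f s) z)
    + dot3 (cross3 z.2 (B s z.1)) (gradv (f s) z)

def IsC1on (T : ℝ) (f : ℝ → Z6 → ℝ) : Prop :=
  ContDiffOn ℝ 1 (fun p : ℝ × Z6 => f p.1 p.2) (Icc (0:ℝ) T ×ˢ (univ : Set Z6))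

def SolvesLinVlasov (T : ℝ) (a b : ℝ → Z6 → ℝ) (A B : ℝ → V3 → V3)
    (Cc : ℝ → Z6 → V3) (χ : Z6 → ℝ) (f : ℝ → Z6 → ℝ) : Prop :=
  ∀ t ∈ Icc (0:ℝ) T, ∀ z : Z6,
    HasDerivWithinAt (fun τ => f τ z)
      (vlasovRHS a b Cc χ f t z - transportT A B f t z) (Icc (0:ℝ) T) t

def fieldC1bNorm (u : V3 → V3) : ℝ :=
  (⨆ x : V3, enorm3 (u x)) + ⨆ x : V3, ‖fderiv ℝ u x‖

def fieldL2C1b (T : ℝ) (A : ℝ → V3 → V3) : ℝ :=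
  Real.sqrt (∫ τ in (0:ℝ)..T, fieldC1bNorm (A τ) ^ 2)

def holderSemi (γ : ℝ) (u : V3 → V3) : ℝ :=
  ⨆ p : Z6, (if p.1 = p.2 then 0
    else ‖fderiv ℝ u p.1 - fderiv ℝ u p.2‖ / enorm3 (p.1 - p.2) ^ γ)

def fieldL2C1γ (T γ : ℝ) (A : ℝ → V3 → V3) : ℝ :=
  Real.sqrt (∫ τ in (0:ℝ)..T, (fieldC1bNorm (A τ) + holderSemi γ (A τ)) ^ 2)

def fieldL2Linf (T : ℝ) (A : ℝ → V3 → V3) : ℝ := supL2 T A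

def fieldOf (lam : ℝ) (f g : Z6 → ℝ) (x : V3) : V3 :=
  (-(1 / (4 * Real.pi * lam))) •
    ∫ y : V3, ∫ w : V3, ((enorm3 (x - y))⁻¹ * g (y, w)) • cross3 w (gradv f (y, w))

/-!
Along a characteristic, `w = Z - Z̃` satisfies
`|ẇ| ≤ (1 + ‖DA‖ + (2 + 2R) ‖B‖_{C¹_b}) |w| + 2R ‖B - B̃‖_∞`, where `R` bounds `Z̃` on `B_ρ(0)`
(by the same Gronwall argument applied to `Z̃` itself). The coefficient is only `L²` in time, so
Gronwall is run in steps: by Cauchy–Schwarz its integral over any interval of length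
`δ = δ(T, K, A)` is at most `1/2`, and on such an interval the maximum of `|w|` is at most twice
its value at one point plus twice the integrated forcing. Chaining `⌈T/δ⌉` steps from `w(t) = 0`
and using `∫ ‖B - B̃‖_∞ ≤ √T ‖B - B̃‖_{L²(L∞)}` gives the claim.
-/
lemma enorm3_eq_norm_toLp (x : V3) : enorm3 x = ‖WithLp.toLp 2 x‖ := by
  simp [enorm3, EuclideanSpace.norm_eq]

lemma enorm3_nonneg (x : V3) : 0 ≤ enorm3 x := Real.sqrt_nonneg _

lemma norm_le_enorm3 (x : V3) : ‖x‖ ≤ enorm3 x := by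
  rw [enorm3_eq_norm_toLp, pi_norm_le_iff_of_nonneg (norm_nonneg _)]
  exact fun i => PiLp.norm_apply_le (WithLp.toLp 2 x) i

lemma enorm3_sub_le (x y : V3) : enorm3 (x - y) ≤ enorm3 x + enorm3 y := by
  simpa only [enorm3_eq_norm_toLp, WithLp.toLp_sub] using norm_sub_le _ _

lemma continuous_enorm3 : Continuous enorm3 := by
  simp only [funext enorm3_eq_norm_toLp]
  fun_prop

lemma norm_le_enorm6 (z : Z6) : ‖z‖ ≤ enorm6 z := by
  have h₁ := norm_le_enorm3 z.1
  have h₂ := norm_le_enorm3 z.2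
  rw [Prod.norm_def, enorm6]
  refine max_le (Real.le_sqrt_of_sq_le ?_) (Real.le_sqrt_of_sq_le ?_) <;>
    nlinarith [norm_nonneg z.1, norm_nonneg z.2, sq_nonneg (enorm3 z.1), sq_nonneg (enorm3 z.2)]

lemma enorm3_sq_le (x : V3) : enorm3 x ^ 2 ≤ 3 * ‖x‖ ^ 2 := by
  rw [enorm3, Real.sq_sqrt (by positivity)]
  calc ∑ i, x i ^ 2 ≤ ∑ _i : Fin 3, ‖x‖ ^ 2 := by
        refine Finset.sum_le_sum fun i _ => ?_
        rw [← sq_abs, ← Real.norm_eq_abs]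
        exact pow_le_pow_left₀ (norm_nonneg _) (norm_le_pi_norm x i) 2
    _ = 3 * ‖x‖ ^ 2 := by simp

lemma enorm6_le_sqrt_six_mul_norm (z : Z6) : enorm6 z ≤ Real.sqrt 6 * ‖z‖ := by
  have h₁ : ‖z.1‖ ≤ ‖z‖ := norm_fst_le z
  have h₂ : ‖z.2‖ ≤ ‖z‖ := norm_snd_le z
  have h : enorm3 z.1 ^ 2 + enorm3 z.2 ^ 2 ≤ 6 * ‖z‖ ^ 2 := by
    nlinarith [enorm3_sq_le z.1, enorm3_sq_le z.2, norm_nonneg z.1, norm_nonneg z.2]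
  calc enorm6 z ≤ Real.sqrt (6 * ‖z‖ ^ 2) := Real.sqrt_le_sqrt h
    _ = Real.sqrt 6 * ‖z‖ := by
      rw [Real.sqrt_mul (by norm_num), Real.sqrt_sq (norm_nonneg z)]

open Matrix in
lemma cross3_eq_crossProduct (a b : V3) : cross3 a b = a ⨯₃ b := rfl

lemma norm_cross3_le (a b : V3) : ‖cross3 a b‖ ≤ 2 * ‖a‖ * ‖b‖ := by
  have ha : ∀ i, |a i| ≤ ‖a‖ := fun i => by simpa using norm_le_pi_norm a i
  have hb : ∀ i, |b i| ≤ ‖b‖ := fun i => by simpa using norm_le_pi_norm b i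
  have hab : ∀ i j, |a i * b j| ≤ ‖a‖ * ‖b‖ := fun i j => by
    rw [abs_mul]; exact mul_le_mul (ha i) (hb j) (abs_nonneg _) (norm_nonneg _)
  refine (pi_norm_le_iff_of_nonneg (by positivity)).2 fun i => ?_
  rw [Real.norm_eq_abs]
  fin_cases i <;>
  · refine (abs_sub _ _).trans ?_
    linarith [hab 1 2, hab 2 1, hab 2 0, hab 0 2, hab 0 1, hab 1 0]

lemma continuous_cross3 : Continuous fun p : V3 × V3 => cross3 p.1 p.2 := by
  unfold cross3; fun_prop

lemma cross3_sub_cross3 (v v' b b' b'' : V3) :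
    cross3 v b - cross3 v' b'' =
      cross3 (v - v') b + cross3 v' (b - b') + cross3 v' (b' - b'') := by
  simp only [cross3_eq_crossProduct, map_sub, LinearMap.sub_apply]
  abel

lemma norm_charRHS_le {A B : ℝ → V3 → V3} {s a b : ℝ} {w : Z6}
    (hA : ‖A s w.1‖ ≤ a) (hB : ‖B s w.1‖ ≤ b) :
    ‖charRHS A B s w‖ ≤ (1 + 2 * b) * ‖w‖ + a := by
  have hb : 0 ≤ b := (norm_nonneg _).trans hB
  have ha : 0 ≤ a := (norm_nonneg _).trans hA
  have hw₂ : ‖w.2‖ ≤ ‖w‖ := norm_snd_le w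
  have hcross : ‖cross3 w.2 (B s w.1)‖ ≤ 2 * ‖w‖ * b := (norm_cross3_le _ _).trans (by gcongr)
  rw [charRHS, Prod.norm_def]
  refine max_le (by nlinarith [norm_nonneg w]) ?_
  calc ‖A s w.1 + cross3 w.2 (B s w.1)‖ ≤ a + 2 * ‖w‖ * b := (norm_add_le _ _).trans (by linarith)
    _ ≤ (1 + 2 * b) * ‖w‖ + a := by nlinarith [norm_nonneg w]

lemma norm_charRHS_sub_charRHS_le {A B B' : ℝ → V3 → V3} {s a b d R : ℝ} {w w' : Z6}
    (ha : 0 ≤ a) (hA : ‖A s w.1 - A s w'.1‖ ≤ a * ‖w.1 - w'.1‖)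
    (hB : ‖B s w.1 - B s w'.1‖ ≤ b * ‖w.1 - w'.1‖) (hBw : ‖B s w.1‖ ≤ b)
    (hBB' : ‖B s w'.1 - B' s w'.1‖ ≤ d) (hw' : ‖w'‖ ≤ R) :
    ‖charRHS A B s w - charRHS A B' s w'‖
      ≤ (1 + a + (2 + 2 * R) * b) * ‖w - w'‖ + 2 * R * d := by
  have hb : 0 ≤ b := (norm_nonneg _).trans hBw
  have hd : 0 ≤ d := (norm_nonneg _).trans hBB'
  have hR : 0 ≤ R := (norm_nonneg _).trans hw'
  have hw₁ : ‖w.1 - w'.1‖ ≤ ‖w - w'‖ := norm_fst_le (w - w')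
  have hw₂ : ‖w.2 - w'.2‖ ≤ ‖w - w'‖ := norm_snd_le (w - w')
  have hw'₂ : ‖w'.2‖ ≤ R := (norm_snd_le w').trans hw'
  have hΔ := norm_nonneg (w - w')
  have h₁ : ‖cross3 (w.2 - w'.2) (B s w.1)‖ ≤ 2 * b * ‖w - w'‖ :=
    (norm_cross3_le _ _).trans (by nlinarith [norm_nonneg (w.2 - w'.2)])
  have h₂ : ‖cross3 w'.2 (B s w.1 - B s w'.1)‖ ≤ 2 * R * (b * ‖w - w'‖) :=
    (norm_cross3_le _ _).trans (by gcongr; exact hB.trans (by gcongr))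
  have h₃ : ‖cross3 w'.2 (B s w'.1 - B' s w'.1)‖ ≤ 2 * R * d :=
    (norm_cross3_le _ _).trans (by gcongr)
  rw [charRHS, charRHS, Prod.norm_def]
  have hfst : ‖w - w'‖ ≤ (1 + a + (2 + 2 * R) * b) * ‖w - w'‖ + 2 * R * d := by
    nlinarith [mul_nonneg (add_nonneg ha (mul_nonneg (by positivity : (0:ℝ) ≤ 2 + 2 * R) hb)) hΔ,
      mul_nonneg hR hd]
  refine max_le (hw₂.trans hfst) ?_
  have hsplit : A s w.1 + cross3 w.2 (B s w.1) - (A s w'.1 + cross3 w'.2 (B' s w'.1))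
      = (A s w.1 - A s w'.1) + (cross3 (w.2 - w'.2) (B s w.1)
        + cross3 w'.2 (B s w.1 - B s w'.1) + cross3 w'.2 (B s w'.1 - B' s w'.1)) := by
    rw [← cross3_sub_cross3]; abel
  rw [Prod.snd_sub, hsplit]
  refine (norm_add_le _ _).trans ((add_le_add hA (norm_add₃_le.trans
    (add_le_add_three h₁ h₂ h₃))).trans ?_)
  nlinarith [mul_le_mul_of_nonneg_left hw₁ ha]

section FieldNorms

variable {u : V3 → V3} {M : ℝ}

lemma norm_le_fieldC1bNorm (hM : ∀ x, enorm3 (u x) ≤ M ∧ ‖fderiv ℝ u x‖ ≤ M) (x : V3) :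
    ‖u x‖ ≤ fieldC1bNorm u :=
  calc ‖u x‖ ≤ enorm3 (u x) := norm_le_enorm3 _
    _ ≤ ⨆ y, enorm3 (u y) := le_ciSup ⟨M, forall_mem_range.2 fun y => (hM y).1⟩ x
    _ ≤ fieldC1bNorm u := le_add_of_nonneg_right (Real.iSup_nonneg fun _ => norm_nonneg _)

lemma norm_fderiv_le_fieldC1bNorm (hM : ∀ x, enorm3 (u x) ≤ M ∧ ‖fderiv ℝ u x‖ ≤ M)
    (x : V3) : ‖fderiv ℝ u x‖ ≤ fieldC1bNorm u :=
  calc ‖fderiv ℝ u x‖ ≤ ⨆ y, ‖fderiv ℝ u y‖ :=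
        le_ciSup ⟨M, forall_mem_range.2 fun y => (hM y).2⟩ x
    _ ≤ fieldC1bNorm u := le_add_of_nonneg_left (Real.iSup_nonneg fun _ => enorm3_nonneg _)

lemma norm_sub_le_of_norm_fderiv_le (hu : ContDiff ℝ 1 u) (hM : ∀ x, ‖fderiv ℝ u x‖ ≤ M)
    (x y : V3) : ‖u x - u y‖ ≤ M * ‖x - y‖ :=
  convex_univ.norm_image_sub_le_of_norm_fderiv_le
    (fun _ _ => (hu.differentiable one_ne_zero).differentiableAt) (fun z _ => hM z)
    (mem_univ y) (mem_univ x)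

end FieldNorms

section Measurability

open TopologicalSpace

variable {α X : Type*} [MeasurableSpace α] [TopologicalSpace X] [SeparableSpace X] [Nonempty X]

lemma aemeasurable_ciSup_of_continuous {μ : Measure α} {F : α → X → ℝ}
    (hmeas : ∀ x, AEMeasurable (F · x) μ) (hcont : ∀ᵐ a ∂μ, Continuous (F a)) :
    AEMeasurable (fun a => ⨆ x, F a x) μ := by
  obtain ⟨e, he⟩ := exists_dense_seq X
  refine (AEMeasurable.iSup fun n => hmeas (e n)).congr ?_
  filter_upwards [hcont] with a ha
  rw [← he.ciSup' ha, iSup_range']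

lemma ContinuousOn.aemeasurable_ciSup [TopologicalSpace α] [OpensMeasurableSpace α]
    {μ : Measure α} {s : Set α} (hs : MeasurableSet s) {F : α → X → ℝ}
    (hF : ContinuousOn (fun p : α × X => F p.1 p.2) (s ×ˢ univ)) :
    AEMeasurable (fun a => ⨆ x, F a x) (μ.restrict s) := by
  refine aemeasurable_ciSup_of_continuous (fun x => ?_) ?_
  · exact (hF.comp (continuousOn_id.prodMk continuousOn_const)
      fun a ha => ⟨ha, mem_univ x⟩).aemeasurable hs
  · exact (ae_restrict_iff' hs).2 (ae_of_all _ fun a ha =>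
      hF.comp_continuous (continuous_const.prodMk continuous_id) fun x => ⟨ha, mem_univ x⟩)

end Measurability

lemma intervalIntegrable_of_abs_le {g : ℝ → ℝ} {a b M : ℝ} (hab : a ≤ b)
    (hg : AEMeasurable g (volume.restrict (Icc a b))) (hM : ∀ x ∈ Icc a b, |g x| ≤ M) :
    IntervalIntegrable g volume a b := by
  rw [intervalIntegrable_iff_integrableOn_Icc_of_le hab]
  refine Integrable.of_bound hg.aestronglyMeasurable M ?_
  exact (ae_restrict_iff' measurableSet_Icc).2 (ae_of_all _ hM)

lemma abs_ciSup_le {X : Type*} [Nonempty X] {F : X → ℝ} {M : ℝ} (h0 : ∀ x, 0 ≤ F x)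
    (hM : ∀ x, F x ≤ M) : |⨆ x, F x| ≤ M := by
  rw [abs_of_nonneg (Real.iSup_nonneg h0)]
  exact ciSup_le hM

lemma intervalIntegrable_and_sq_of_abs_le {g : ℝ → ℝ} {a b M : ℝ} (hab : a ≤ b)
    (hg : AEMeasurable g (volume.restrict (Icc a b))) (hM : ∀ x ∈ Icc a b, |g x| ≤ M) :
    IntervalIntegrable g volume a b ∧ IntervalIntegrable (fun x => g x ^ 2) volume a b := by
  refine ⟨intervalIntegrable_of_abs_le hab hg hM,
    intervalIntegrable_of_abs_le (M := M ^ 2) hab (hg.pow_const 2) fun x hx => ?_⟩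
  rw [abs_pow]
  exact pow_le_pow_left₀ (abs_nonneg _) (hM x hx) 2

section CauchySchwarz

variable {g : ℝ → ℝ} {a b : ℝ}

lemma sq_integral_le_mul_integral_sq (hg : IntervalIntegrable g volume a b)
    (hg2 : IntervalIntegrable (fun x => g x ^ 2) volume a b) (hab : a ≤ b) :
    (∫ x in a..b, g x) ^ 2 ≤ (b - a) * ∫ x in a..b, g x ^ 2 := by
  have hquad : ∀ c : ℝ,
      0 ≤ (b - a) * (c * c) + (-2 * ∫ x in a..b, g x) * c + ∫ x in a..b, g x ^ 2 := by
    intro c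
    have hexp : (fun x => (g x - c) ^ 2) = fun x => (g x ^ 2 - 2 * c * g x) + c ^ 2 := by
      ext x; ring
    have h := intervalIntegral.integral_nonneg (μ := volume) hab fun x _ => sq_nonneg (g x - c)
    rw [hexp, intervalIntegral.integral_add (hg2.sub (hg.const_mul _)) intervalIntegrable_const,
      intervalIntegral.integral_sub hg2 (hg.const_mul _), intervalIntegral.integral_const_mul,
      intervalIntegral.integral_const, smul_eq_mul] at h
    linarith
  have := discrim_le_zero hquad
  rw [discrim] at this
  linarith

lemma integral_le_sqrt_mul_sqrt_integral_sq (hg : IntervalIntegrable g volume a b)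
    (hg2 : IntervalIntegrable (fun x => g x ^ 2) volume a b) (hab : a ≤ b) :
    ∫ x in a..b, g x ≤ Real.sqrt (b - a) * Real.sqrt (∫ x in a..b, g x ^ 2) := by
  rw [← Real.sqrt_mul (sub_nonneg.2 hab)]
  exact (le_abs_self _).trans (Real.abs_le_sqrt (sq_integral_le_mul_integral_sq hg hg2 hab))

end CauchySchwarz

section Gronwall

variable {E : Type*} [NormedAddCommGroup E] [NormedSpace ℝ E] [CompleteSpace E]
  {f f' : ℝ → E} {a b : ℝ}

lemma norm_sub_le_integral_norm_deriv
    (hf : ∀ x ∈ Icc a b, HasDerivWithinAt f (f' x) (Icc a b) x)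
    (hf' : ContinuousOn f' (Icc a b)) {x y : ℝ} (hx : x ∈ Icc a b) (hy : y ∈ Icc a b) :
    ‖f y - f x‖ ≤ ∫ τ in a..b, ‖f' τ‖ := by
  wlog hxy : x ≤ y generalizing x y
  · rw [norm_sub_rev]; exact this hy hx (le_of_not_ge hxy)
  have hsub : Icc x y ⊆ Icc a b := Icc_subset_Icc hx.1 hy.2
  have hftc : ∫ τ in x..y, f' τ = f y - f x := by
    refine intervalIntegral.integral_eq_sub_of_hasDeriv_right_of_le hxy
      (fun τ hτ => (hf τ (hsub hτ)).continuousWithinAt.mono hsub) (fun τ hτ => ?_)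
      ((hf'.mono hsub).intervalIntegrable_of_Icc hxy)
    exact ((hf τ (hsub (Ioo_subset_Icc_self hτ))).hasDerivAt
      (Icc_mem_nhds (hx.1.trans_lt hτ.1) (hτ.2.trans_le hy.2))).hasDerivWithinAt
  rw [← hftc]
  refine (intervalIntegral.norm_integral_le_integral_norm hxy).trans ?_
  exact intervalIntegral.integral_mono_interval hx.1 hxy hy.2
    (ae_of_all _ fun _ => norm_nonneg _) (hf'.norm.intervalIntegrable_of_Icc (hx.1.trans hx.2))

variable {L h : ℝ → ℝ}

/-- At a maximiser `c` of `‖f‖` on `[a, b]`, the term `(∫ L) ‖f c‖ ≤ ‖f c‖ / 2` is absorbed. -/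
lemma norm_le_two_mul_add_of_integral_le_half
    (hf : ∀ x ∈ Icc a b, HasDerivWithinAt f (f' x) (Icc a b) x)
    (hf' : ContinuousOn f' (Icc a b))
    (hL : IntervalIntegrable L volume a b) (hh : IntervalIntegrable h volume a b)
    (hL0 : ∀ x ∈ Icc a b, 0 ≤ L x) (hbound : ∀ x ∈ Icc a b, ‖f' x‖ ≤ L x * ‖f x‖ + h x)
    (hLhalf : ∫ τ in a..b, L τ ≤ 1 / 2) {x y : ℝ} (hx : x ∈ Icc a b) (hy : y ∈ Icc a b) :
    ‖f y‖ ≤ 2 * ‖f x‖ + 2 * ∫ τ in a..b, h τ := by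
  have hab : a ≤ b := hx.1.trans hx.2
  obtain ⟨c, hc, hmax⟩ := isCompact_Icc.exists_isMaxOn (nonempty_Icc.2 hab)
    (fun τ hτ => (hf τ hτ).continuousWithinAt.norm)
  have hLf : ∀ τ ∈ Icc a b, ‖f' τ‖ ≤ L τ * ‖f c‖ + h τ := fun τ hτ =>
    (hbound τ hτ).trans (by gcongr; exacts [hL0 τ hτ, hmax hτ])
  have hfc : ‖f c‖ ≤ ‖f x‖ + (∫ τ in a..b, L τ) * ‖f c‖ + ∫ τ in a..b, h τ := calc
    ‖f c‖ ≤ ‖f x‖ + ∫ τ in a..b, ‖f' τ‖ := by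
        linarith [norm_sub_norm_le (f c) (f x), norm_sub_le_integral_norm_deriv hf hf' hx hc]
    _ ≤ ‖f x‖ + ∫ τ in a..b, (L τ * ‖f c‖ + h τ) := by
        gcongr
        exact intervalIntegral.integral_mono_on hab (hf'.norm.intervalIntegrable_of_Icc hab)
          ((hL.mul_const _).add hh) hLf
    _ = ‖f x‖ + (∫ τ in a..b, L τ) * ‖f c‖ + ∫ τ in a..b, h τ := by
        rw [intervalIntegral.integral_add (hL.mul_const _) hh,
          intervalIntegral.integral_mul_const]
        ring
  have hy' : ‖f y‖ ≤ ‖f c‖ := hmax hy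
  nlinarith [norm_nonneg (f c)]

lemma norm_le_four_pow_mul_of_integral_le_half {δ : ℝ}
    (hf : ∀ x ∈ Icc a b, HasDerivWithinAt f (f' x) (Icc a b) x)
    (hf' : ContinuousOn f' (Icc a b))
    (hL : IntervalIntegrable L volume a b) (hh : IntervalIntegrable h volume a b)
    (hL0 : ∀ x ∈ Icc a b, 0 ≤ L x) (hh0 : ∀ x ∈ Icc a b, 0 ≤ h x)
    (hbound : ∀ x ∈ Icc a b, ‖f' x‖ ≤ L x * ‖f x‖ + h x)
    (hδ : ∀ x ∈ Icc a b, ∀ y ∈ Icc a b, x ≤ y → y - x ≤ δ → ∫ τ in x..y, L τ ≤ 1 / 2)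
    {t : ℝ} (ht : t ∈ Icc a b) (n : ℕ) {s : ℝ} (hs : s ∈ Icc a b) (hst : |s - t| ≤ n * δ) :
    ‖f s‖ ≤ 4 ^ n * (‖f t‖ + ∫ τ in a..b, h τ) := by
  have hab : a ≤ b := ht.1.trans ht.2
  have hH : 0 ≤ ∫ τ in a..b, h τ := intervalIntegral.integral_nonneg hab hh0
  induction n generalizing s with
  | zero =>
    obtain rfl : s = t := by simpa [sub_eq_zero] using hst
    linarith
  | succ n ih =>
    have hn : (0 : ℝ) < n + 1 := by positivity
    -- one step of length `|s - t| / (n + 1)` from `s`, leaving `n` steps to `t`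
    set s' := s + (n + 1 : ℝ)⁻¹ * (t - s) with hs'_def
    have hs' : s' ∈ Icc a b := (convex_Icc a b).add_smul_sub_mem hs ht (t := (n + 1 : ℝ)⁻¹)
      ⟨by positivity, inv_le_one_of_one_le₀ (by simp)⟩
    have hs't : |s' - t| ≤ n * δ := by
      have : s' - t = (s - t) * (n / (n + 1)) := by rw [hs'_def]; field_simp; ring
      rw [this, abs_mul, abs_of_nonneg (show (0 : ℝ) ≤ n / (n + 1) by positivity)]
      calc |s - t| * (n / (n + 1)) ≤ ((n + 1) * δ) * (n / (n + 1)) := by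
            gcongr; exact_mod_cast hst
        _ = n * δ := by field_simp
    have hss' : max s s' - min s s' ≤ δ := by
      have : s - s' = (s - t) / (n + 1) := by rw [hs'_def]; field_simp; ring
      rw [max_sub_min_eq_abs, abs_sub_comm, this, abs_div, abs_of_pos hn, div_le_iff₀ hn]
      push_cast at hst
      linarith
    have hsub : Icc (min s s') (max s s') ⊆ Icc a b := uIcc_subset_Icc hs hs'
    have hsub' : uIcc (min s s') (max s s') ⊆ uIcc a b := by
      rwa [uIcc_of_le min_le_max, uIcc_of_le hab]
    have hstep := norm_le_two_mul_add_of_integral_le_half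
      (fun x hx => (hf x (hsub hx)).mono hsub) (hf'.mono hsub) (hL.mono_set hsub')
      (hh.mono_set hsub') (fun x hx => hL0 x (hsub hx)) (fun x hx => hbound x (hsub hx))
      (hδ _ (hsub ⟨le_rfl, min_le_max⟩) _ (hsub ⟨min_le_max, le_rfl⟩) min_le_max hss')
      (right_mem_uIcc (a := s)) (left_mem_uIcc (b := s'))
    have hHsub : ∫ τ in min s s'..max s s', h τ ≤ ∫ τ in a..b, h τ :=
      intervalIntegral.integral_mono_interval (hsub ⟨le_rfl, min_le_max⟩).1 min_le_max
        (hsub ⟨min_le_max, le_rfl⟩).2 ((ae_restrict_iff' measurableSet_Ioc).2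
          (ae_of_all _ fun x hx => hh0 x ⟨hx.1.le, hx.2⟩)) hh
    have h4 : (1 : ℝ) ≤ 4 ^ n := one_le_pow₀ (by norm_num)
    have hft := norm_nonneg (f t)
    calc ‖f s‖ ≤ 2 * ‖f s'‖ + 2 * ∫ τ in a..b, h τ := by linarith
      _ ≤ 2 * (4 ^ n * (‖f t‖ + ∫ τ in a..b, h τ)) + 2 * ∫ τ in a..b, h τ := by
        gcongr; exact ih hs' hs't
      _ ≤ 4 ^ (n + 1) * (‖f t‖ + ∫ τ in a..b, h τ) := by rw [pow_succ]; nlinarith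

end Gronwall

/-- `4 ^ n` for `n` Gronwall steps of length `(2 (c + K) + 1)⁻²` covering an interval of
length `T`. -/
def gronwallFactor (T c K : ℝ) : ℝ := 4 ^ ⌈T * (2 * (c + K) + 1) ^ 2⌉₊

lemma gronwallFactor_pos (T c K : ℝ) : 0 < gronwallFactor T c K := by
  unfold gronwallFactor; positivity

section GronwallL2

variable {E : Type*} [NormedAddCommGroup E] [NormedSpace ℝ E] [CompleteSpace E]
  {f f' : ℝ → E} {a b : ℝ} {g h : ℝ → ℝ}

lemma integral_const_add_mul_le_half {c k K : ℝ} (hc : 0 ≤ c) (hk : 0 ≤ k)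
    (hg : IntervalIntegrable g volume a b)
    (hg2 : IntervalIntegrable (fun x => g x ^ 2) volume a b)
    (hgK : Real.sqrt (∫ x in a..b, g x ^ 2) ≤ K)
    {x y : ℝ} (hx : x ∈ Icc a b) (hy : y ∈ Icc a b) (hxy : x ≤ y)
    (hyx : y - x ≤ ((2 * (c + k * K) + 1) ^ 2)⁻¹) :
    ∫ τ in x..y, (c + k * g τ) ≤ 1 / 2 := by
  have hK : 0 ≤ K := (Real.sqrt_nonneg _).trans hgK
  set u := 2 * (c + k * K) + 1
  have hu1 : 1 ≤ u := by nlinarith [mul_nonneg hk hK]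
  have hsub : uIcc x y ⊆ uIcc a b := uIcc_subset_uIcc (Icc_subset_uIcc hx) (Icc_subset_uIcc hy)
  have hsqrt : Real.sqrt (y - x) ≤ u⁻¹ := by
    calc Real.sqrt (y - x) ≤ Real.sqrt ((u ^ 2)⁻¹) := Real.sqrt_le_sqrt hyx
      _ = u⁻¹ := by rw [Real.sqrt_inv, Real.sqrt_sq (by linarith)]
  have hg2xy : Real.sqrt (∫ τ in x..y, g τ ^ 2) ≤ K := by
    refine le_trans (Real.sqrt_le_sqrt ?_) hgK
    exact intervalIntegral.integral_mono_interval hx.1 hxy hy.2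
      (ae_of_all _ fun τ => sq_nonneg (g τ)) hg2
  have hgxy : ∫ τ in x..y, g τ ≤ u⁻¹ * K :=
    (integral_le_sqrt_mul_sqrt_integral_sq (hg.mono_set hsub) (hg2.mono_set hsub) hxy).trans
      (mul_le_mul hsqrt hg2xy (Real.sqrt_nonneg _) (by positivity))
  have hcxy : (y - x) * c ≤ u⁻¹ * c := by
    refine mul_le_mul_of_nonneg_right (hyx.trans ?_) hc
    rw [inv_le_inv₀ (by positivity) (by positivity)]
    nlinarith
  rw [intervalIntegral.integral_add intervalIntegrable_const ((hg.mono_set hsub).const_mul k),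
    intervalIntegral.integral_const, intervalIntegral.integral_const_mul, smul_eq_mul]
  calc (y - x) * c + k * ∫ τ in x..y, g τ ≤ u⁻¹ * c + k * (u⁻¹ * K) := by gcongr
    _ = (c + k * K) / u := by field_simp
    _ ≤ 1 / 2 := by rw [div_le_iff₀ (by positivity)]; linarith

lemma norm_le_gronwallFactor_mul {c k K : ℝ} (hc : 0 ≤ c) (hk : 0 ≤ k)
    (hf : ∀ x ∈ Icc a b, HasDerivWithinAt f (f' x) (Icc a b) x)
    (hf' : ContinuousOn f' (Icc a b))
    (hg : IntervalIntegrable g volume a b)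
    (hg2 : IntervalIntegrable (fun x => g x ^ 2) volume a b) (hg0 : ∀ x ∈ Icc a b, 0 ≤ g x)
    (hgK : Real.sqrt (∫ x in a..b, g x ^ 2) ≤ K)
    (hh : IntervalIntegrable h volume a b) (hh0 : ∀ x ∈ Icc a b, 0 ≤ h x)
    (hbound : ∀ x ∈ Icc a b, ‖f' x‖ ≤ (c + k * g x) * ‖f x‖ + h x)
    {s t : ℝ} (hs : s ∈ Icc a b) (ht : t ∈ Icc a b) :
    ‖f s‖ ≤ gronwallFactor (b - a) c (k * K) * (‖f t‖ + ∫ τ in a..b, h τ) := by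
  have hK : 0 ≤ K := (Real.sqrt_nonneg _).trans hgK
  set u := 2 * (c + k * K) + 1
  have hu : 0 < u := by positivity
  refine norm_le_four_pow_mul_of_integral_le_half hf hf'
    (intervalIntegrable_const.add (hg.const_mul k)) hh
    (fun x hx => add_nonneg hc (mul_nonneg hk (hg0 x hx))) hh0 hbound
    (fun x hx y hy hxy hyx => integral_const_add_mul_le_half hc hk hg hg2 hgK hx hy hxy hyx)
    ht _ hs ?_
  calc |s - t| ≤ (b - a) * u ^ 2 * (u ^ 2)⁻¹ := by
        rw [mul_inv_cancel_right₀ (by positivity), abs_le]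
        constructor <;> linarith [hs.1, hs.2, ht.1, ht.2]
    _ ≤ _ := by gcongr; exact Nat.le_ceil _

end GronwallL2

section Families

variable {T : ℝ}

lemma ContinuousOn.intervalIntegrable_iSup_enorm3 {u : ℝ → V3 → V3} {M : ℝ} (hT : 0 ≤ T)
    (hu : ContinuousOn (fun p : ℝ × V3 => u p.1 p.2) (Icc (0:ℝ) T ×ˢ (univ : Set V3)))
    (hM : ∀ τ ∈ Icc (0:ℝ) T, ∀ x, enorm3 (u τ x) ≤ M) :
    IntervalIntegrable (fun τ => ⨆ x, enorm3 (u τ x)) volume 0 T ∧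
      IntervalIntegrable (fun τ => (⨆ x, enorm3 (u τ x)) ^ 2) volume 0 T :=
  intervalIntegrable_and_sq_of_abs_le hT
    (ContinuousOn.aemeasurable_ciSup measurableSet_Icc (continuous_enorm3.comp_continuousOn hu))
    fun τ hτ => abs_ciSup_le (fun _ => enorm3_nonneg _) (hM τ hτ)

lemma FamC1bV.intervalIntegrable_fieldC1bNorm {B : ℝ → V3 → V3} (hB : FamC1bV T B)
    (hT : 0 ≤ T) :
    IntervalIntegrable (fun τ => fieldC1bNorm (B τ)) volume 0 T ∧
      IntervalIntegrable (fun τ => fieldC1bNorm (B τ) ^ 2) volume 0 T := by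
  obtain ⟨hc, -, hdc, M, hM⟩ := hB
  refine intervalIntegrable_and_sq_of_abs_le (M := M + M) hT
    ((ContinuousOn.aemeasurable_ciSup measurableSet_Icc
      (continuous_enorm3.comp_continuousOn hc)).add
      (ContinuousOn.aemeasurable_ciSup measurableSet_Icc
        (continuous_norm.comp_continuousOn hdc))) fun τ hτ => ?_
  exact (abs_add_le _ _).trans (add_le_add
    (abs_ciSup_le (fun _ => enorm3_nonneg _) fun x => (hM τ hτ x).1)
    (abs_ciSup_le (fun _ => norm_nonneg _) fun x => (hM τ hτ x).2))

lemma ContinuousOn.charRHS {A B : ℝ → V3 → V3} {s : Set ℝ} {γ : ℝ → Z6}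
    (hA : ContinuousOn (fun p : ℝ × V3 => A p.1 p.2) (s ×ˢ (univ : Set V3)))
    (hB : ContinuousOn (fun p : ℝ × V3 => B p.1 p.2) (s ×ˢ (univ : Set V3)))
    (hγ : ContinuousOn γ s) : ContinuousOn (fun σ => charRHS A B σ (γ σ)) s := by
  have hX : ContinuousOn (fun σ => (σ, (γ σ).1)) s := continuousOn_id.prodMk hγ.fst
  have hAγ := hA.comp hX fun σ hσ => ⟨hσ, mem_univ _⟩
  have hBγ := hB.comp hX fun σ hσ => ⟨hσ, mem_univ _⟩
  exact hγ.snd.prodMk (hAγ.add (continuous_cross3.comp_continuousOn (hγ.snd.prodMk hBγ)))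

end Families

section CharFlow

variable {T : ℝ} {A B B' : ℝ → V3 → V3} {Z Z' : ℝ → ℝ → Z6 → Z6}

lemma IsCharFlow.continuousOn_charRHS (hZ : IsCharFlow T A B Z)
    (hA : ContinuousOn (fun p : ℝ × V3 => A p.1 p.2) (Icc (0:ℝ) T ×ˢ (univ : Set V3)))
    (hB : ContinuousOn (fun p : ℝ × V3 => B p.1 p.2) (Icc (0:ℝ) T ×ˢ (univ : Set V3)))
    {t : ℝ} (ht : t ∈ Icc (0:ℝ) T) (z : Z6) :
    ContinuousOn (fun σ => charRHS A B σ (Z σ t z)) (Icc (0:ℝ) T) :=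
  hA.charRHS hB fun σ hσ => ((hZ t ht z).2 σ hσ).continuousWithinAt

lemma IsCharFlow.norm_le {MA K : ℝ} (hZ : IsCharFlow T A B Z)
    (hAc : ContinuousOn (fun p : ℝ × V3 => A p.1 p.2) (Icc (0:ℝ) T ×ˢ (univ : Set V3)))
    (hMA : ∀ τ ∈ Icc (0:ℝ) T, ∀ x, ‖A τ x‖ ≤ MA) (hB : FamC1bV T B)
    (hBK : fieldL2C1b T B ≤ K) {s t : ℝ} (hs : s ∈ Icc (0:ℝ) T) (ht : t ∈ Icc (0:ℝ) T)
    (z : Z6) :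
    ‖Z s t z‖ ≤ gronwallFactor T 1 (2 * K) * (‖z‖ + T * MA) := by
  obtain ⟨hN, hN2⟩ := hB.intervalIntegrable_fieldC1bNorm (ht.1.trans ht.2)
  obtain ⟨hBc, -, -, M, hM⟩ := hB
  have h := norm_le_gronwallFactor_mul zero_le_one zero_le_two ((hZ t ht z).2)
    (hZ.continuousOn_charRHS hAc hBc ht z) hN hN2
    (fun τ hτ => (norm_nonneg _).trans (norm_le_fieldC1bNorm (hM τ hτ) 0)) hBK
    intervalIntegrable_const (fun _ _ => (norm_nonneg _).trans (hMA t ht 0))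
    (fun τ hτ => norm_charRHS_le (hMA τ hτ _) (norm_le_fieldC1bNorm (hM τ hτ) _)) hs ht
  rwa [(hZ t ht z).1, sub_zero, intervalIntegral.integral_const, smul_eq_mul, sub_zero] at h

lemma IsCharFlow.norm_sub_le {MA K R : ℝ} (hZ : IsCharFlow T A B Z)
    (hZ' : IsCharFlow T A B' Z')
    (hAc : ContinuousOn (fun p : ℝ × V3 => A p.1 p.2) (Icc (0:ℝ) T ×ˢ (univ : Set V3)))
    (hAd : ∀ τ ∈ Icc (0:ℝ) T, ContDiff ℝ 1 (A τ))
    (hMA : ∀ τ ∈ Icc (0:ℝ) T, ∀ x, ‖fderiv ℝ (A τ) x‖ ≤ MA)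
    (hB : FamC1bV T B) (hBK : fieldL2C1b T B ≤ K) (hB' : FamC1bV T B')
    {t : ℝ} (ht : t ∈ Icc (0:ℝ) T) {z : Z6} (hR : ∀ σ ∈ Icc (0:ℝ) T, ‖Z' σ t z‖ ≤ R)
    {s : ℝ} (hs : s ∈ Icc (0:ℝ) T) :
    ‖Z s t z - Z' s t z‖ ≤ gronwallFactor T (1 + MA) ((2 + 2 * R) * K) *
      (2 * R * (Real.sqrt T * fieldL2Linf T (fun τ x => B τ x - B' τ x))) := by
  have hT : 0 ≤ T := ht.1.trans ht.2
  obtain ⟨hN, hN2⟩ := hB.intervalIntegrable_fieldC1bNorm hT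
  obtain ⟨hBc, hBd, -, M, hM⟩ := hB
  obtain ⟨hB'c, -, -, M', hM'⟩ := hB'
  have hdM : ∀ τ ∈ Icc (0:ℝ) T, ∀ x, enorm3 (B τ x - B' τ x) ≤ M + M' := fun τ hτ x =>
    (enorm3_sub_le _ _).trans (add_le_add (hM τ hτ x).1 (hM' τ hτ x).1)
  obtain ⟨hd, hd2⟩ := (hBc.sub hB'c).intervalIntegrable_iSup_enorm3 hT hdM
  have hd_le : ∀ τ ∈ Icc (0:ℝ) T, ∀ x,
      ‖B τ x - B' τ x‖ ≤ ⨆ y, enorm3 (B τ y - B' τ y) := fun τ hτ x =>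
    (norm_le_enorm3 _).trans (le_ciSup ⟨M + M', forall_mem_range.2 (hdM τ hτ)⟩ x)
  have hR0 : 0 ≤ R := (norm_nonneg _).trans (hR t ht)
  have hMA0 : 0 ≤ MA := (norm_nonneg _).trans (hMA t ht 0)
  have h := norm_le_gronwallFactor_mul (f := fun σ => Z σ t z - Z' σ t z)
    (c := 1 + MA) (k := 2 + 2 * R) (by positivity)
    (by positivity) (fun σ hσ => ((hZ t ht z).2 σ hσ).sub ((hZ' t ht z).2 σ hσ))
    ((hZ.continuousOn_charRHS hAc hBc ht z).sub (hZ'.continuousOn_charRHS hAc hB'c ht z))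
    hN hN2 (fun τ hτ => (norm_nonneg _).trans (norm_le_fieldC1bNorm (hM τ hτ) 0)) hBK
    (hd.const_mul (2 * R))
    (fun τ _ => mul_nonneg (by positivity) (Real.iSup_nonneg fun _ => enorm3_nonneg _))
    (fun σ hσ => norm_charRHS_sub_charRHS_le hMA0
      (norm_sub_le_of_norm_fderiv_le (hAd σ hσ) (hMA σ hσ) _ _)
      (norm_sub_le_of_norm_fderiv_le (hBd σ hσ) (norm_fderiv_le_fieldC1bNorm (hM σ hσ)) _ _)
      (norm_le_fieldC1bNorm (hM σ hσ) _) (hd_le σ hσ _) (hR σ hσ)) hs ht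
  rw [(hZ t ht z).1, (hZ' t ht z).1, sub_self, norm_zero, zero_add, sub_zero,
    intervalIntegral.integral_const_mul] at h
  refine h.trans (mul_le_mul_of_nonneg_left (mul_le_mul_of_nonneg_left ?_ (by positivity))
    (gronwallFactor_pos _ _ _).le)
  have hCS := integral_le_sqrt_mul_sqrt_integral_sq hd hd2 hT
  rwa [sub_zero] at hCS

end CharFlow

theorem characteristic_flow_lipschitz_in_B_general
    (T K ρ : ℝ) (hT : 0 < T) (hρ : 0 < ρ)
    (A : ℝ → V3 → V3) (hA : FamC1bV T A) :
    ∃ C > (0:ℝ), ∀ B B' : ℝ → V3 → V3,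
      FamC1bV T B → FamC1bV T B' →
      fieldL2C1b T B ≤ K → fieldL2C1b T B' ≤ K →
      ∀ Z Z' : ℝ → ℝ → Z6 → Z6,
        IsCharFlow T A B Z → IsCharFlow T A B' Z' →
        ∀ s ∈ Icc (0:ℝ) T, ∀ t ∈ Icc (0:ℝ) T, ∀ z : Z6, enorm6 z ≤ ρ →
          enorm6 (Z s t z - Z' s t z)
            ≤ C * fieldL2Linf T (fun τ x => B τ x - B' τ x) := by
  obtain ⟨hAc, hAd, -, MA, hMA⟩ := hA
  have hMA0 : 0 ≤ MA := (enorm3_nonneg _).trans (hMA 0 ⟨le_rfl, hT.le⟩ 0).1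
  set R := gronwallFactor T 1 (2 * K) * (ρ + T * MA)
  have hR : 0 < R := mul_pos (gronwallFactor_pos _ _ _) (by positivity)
  refine ⟨Real.sqrt 6 * gronwallFactor T (1 + MA) ((2 + 2 * R) * K) * (2 * R) * Real.sqrt T,
    by have := gronwallFactor_pos T (1 + MA) ((2 + 2 * R) * K); positivity, ?_⟩
  intro B B' hB hB' hBK hB'K Z Z' hZ hZ' s hs t ht z hz
  have hAbd : ∀ τ ∈ Icc (0:ℝ) T, ∀ x, ‖A τ x‖ ≤ MA := fun τ hτ x =>
    (norm_le_enorm3 _).trans (hMA τ hτ x).1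
  have hZ'R : ∀ σ ∈ Icc (0:ℝ) T, ‖Z' σ t z‖ ≤ R := fun σ hσ =>
    (hZ'.norm_le hAc hAbd hB' hB'K hσ ht z).trans (mul_le_mul_of_nonneg_left
      (by linarith [norm_le_enorm6 z]) (gronwallFactor_pos _ _ _).le)
  have hdiff := hZ.norm_sub_le hZ' hAc hAd (fun τ hτ x => (hMA τ hτ x).2) hB hBK hB' ht hZ'R hs
  calc enorm6 (Z s t z - Z' s t z) ≤ Real.sqrt 6 * ‖Z s t z - Z' s t z‖ :=
        enorm6_le_sqrt_six_mul_norm _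
    _ ≤ _ := mul_le_mul_of_nonneg_left hdiff (Real.sqrt_nonneg 6)
    _ = _ := by ring

/-- Lipschitz dependence of the characteristic flow on the magnetic
field: `sup_{z ∈ B_ρ(0)} |Z(s,t,z) − Z̃(s,t,z)| ≤ C ‖B − B̃‖_{L²(0,T;L∞)}`. -/
theorem characteristic_flow_lipschitz_in_B
    (T K ρ : ℝ) (hT : 0 < T) (hK : 0 < K) (hρ : 0 < ρ)
    (A : ℝ → V3 → V3) (hA : FamC1bV T A) :
    ∃ C > (0:ℝ), ∀ B B' : ℝ → V3 → V3,
      FamC1bV T B → FamC1bV T B' →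
      fieldL2C1b T B ≤ K → fieldL2C1b T B' ≤ K →
      ∀ Z Z' : ℝ → ℝ → Z6 → Z6,
        IsCharFlow T A B Z → IsCharFlow T A B' Z' →
        ∀ s ∈ Icc (0:ℝ) T, ∀ t ∈ Icc (0:ℝ) T, ∀ z : Z6, enorm6 z ≤ ρ →
          enorm6 (Z s t z - Z' s t z)
            ≤ C * fieldL2Linf T (fun τ x => B τ x - B' τ x) :=
  characteristic_flow_lipschitz_in_B_general T K ρ hT hρ A hA

end
end

section
/- Let X be a real normed vector space, let K ⊆ X be a convex set contained in an open set U ⊆ X, let B̄ ∈ K, and let J : U → ℝ be twice continuously Fréchet differentiable. Let ε > 0, C ≥ 0, γ > 0 and 0 < α < 2 + γ. Assume: (i) J'(B̄)[B − B̄] ≥ 0 for all B ∈ K; (ii) J''(B̄)[B − B̄, B − B̄] ≥ ε ‖B − B̄‖^α for all B ∈ K; (iii) ‖J''(B̄ + θ(B − B̄)) − J''(B̄)‖ ≤ C ‖θ(B − B̄)‖^γ for all B ∈ K and θ ∈ [0,1], where ‖·‖ on second derivatives is the operator norm of bilinear forms. Then there exists δ > 0 such that for all B ∈ K with ‖B −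 B̄‖ < δ one has J(B) ≥ J(B̄) + (ε/4) ‖B − B̄‖^α; in particular B̄ is a strict local minimizer of J on K. -/
open MeasureTheory Set
open scoped Classical

noncomputable section

/-! Along the segment `g t = J (B̄ + t • h)`, `h = B - B̄`, the Hölder bound on `J''` gives
`g'' ≥ ε ‖h‖ ^ α - C ‖h‖ ^ (2 + γ)` on `[0, 1]`, so the second-order Taylor lower bound and
`g' 0 ≥ 0` yield `g 1 ≥ g 0 + (ε ‖h‖ ^ α - C ‖h‖ ^ (2 + γ)) / 2`. Since `α < 2 + γ`, the
Hölder term is at most `(ε / 2) ‖h‖ ^ α` once `‖h‖` is small, leaving the margin `(ε / 4) ‖h‖ ^ α`. -/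

theorem monotoneOn_sub_of_hasDerivWithinAt_le {f g f' g' : ℝ → ℝ} {a b : ℝ}
    (hf : ∀ t ∈ Icc a b, HasDerivWithinAt f (f' t) (Icc a b) t)
    (hg : ∀ t ∈ Icc a b, HasDerivWithinAt g (g' t) (Icc a b) t)
    (hle : ∀ t ∈ Ioo a b, g' t ≤ f' t) :
    MonotoneOn (fun t => f t - g t) (Icc a b) := by
  have hfg : ∀ t ∈ Icc a b, HasDerivWithinAt (fun t => f t - g t) (f' t - g' t) (Icc a b) t :=
    fun t ht => (hf t ht).sub (hg t ht)
  refine monotoneOn_of_hasDerivWithinAt_nonneg (f' := fun t => f' t - g' t) (convex_Icc a b)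
    (fun t ht => (hfg t ht).continuousWithinAt) (fun t ht => ?_) (fun t ht => ?_)
  · rw [interior_Icc] at ht ⊢
    exact (hfg t (Ioo_subset_Icc_self ht)).mono Ioo_subset_Icc_self
  · rw [interior_Icc] at ht
    exact sub_nonneg.2 (hle t ht)

theorem add_deriv_mul_add_le_of_le_deriv2 {g g' g'' : ℝ → ℝ} {a b m : ℝ} (hab : a ≤ b)
    (hg : ∀ t ∈ Icc a b, HasDerivWithinAt g (g' t) (Icc a b) t)
    (hg' : ∀ t ∈ Icc a b, HasDerivWithinAt g' (g'' t) (Icc a b) t)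
    (hm : ∀ t ∈ Ioo a b, m ≤ g'' t) :
    g a + g' a * (b - a) + m / 2 * (b - a) ^ 2 ≤ g b := by
  have hlin : ∀ t ∈ Icc a b, HasDerivWithinAt (fun t => m * (t - a)) m (Icc a b) t := fun t _ =>
    (((hasDerivAt_id t).sub_const a).const_mul m).hasDerivWithinAt.congr_deriv (mul_one m)
  have hg'_ge : ∀ t ∈ Icc a b, g' a + m * (t - a) ≤ g' t := by
    intro t ht
    have := monotoneOn_sub_of_hasDerivWithinAt_le hg' hlin hm (left_mem_Icc.2 hab) ht ht.1
    simp only [sub_self, mul_zero] at this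
    linarith
  have hquad : ∀ t ∈ Icc a b, HasDerivWithinAt (fun t => g' a * (t - a) + m / 2 * (t - a) ^ 2)
      (g' a + m * (t - a)) (Icc a b) t := fun t _ => by
    have h1 := ((hasDerivAt_id t).sub_const a).const_mul (g' a)
    have h2 := (((hasDerivAt_id t).sub_const a).pow 2).const_mul (m / 2)
    exact (h1.add h2).hasDerivWithinAt.congr_deriv (by simp; ring)
  have := monotoneOn_sub_of_hasDerivWithinAt_le hg hquad
    (fun t ht => hg'_ge t (Ioo_subset_Icc_self ht)) (left_mem_Icc.2 hab) (right_mem_Icc.2 hab) hab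
  simp only [sub_self, mul_zero, zero_add, zero_pow two_ne_zero, sub_zero] at this
  linarith

theorem HasFDerivAt.hasDerivAt_add_smul {X F : Type*} [NormedAddCommGroup X] [NormedSpace ℝ X]
    [NormedAddCommGroup F] [NormedSpace ℝ F] {f : X → F} {f' : X →L[ℝ] F} {x h : X} {t : ℝ}
    (hf : HasFDerivAt f f' (x + t • h)) :
    HasDerivAt (fun s : ℝ => f (x + s • h)) (f' h) t := by
  have hline : HasDerivAt (fun s : ℝ => x + s • h) h t := by
    simpa using ((hasDerivAt_id t).smul_const h).const_add x
  exact hf.comp_hasDerivAt t hline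

theorem add_fderiv_add_le_of_le_fderiv2 {X : Type*} [NormedAddCommGroup X] [NormedSpace ℝ X]
    {U : Set X} {J : X → ℝ} {J' : X → X →L[ℝ] ℝ} {J'' : X → X →L[ℝ] X →L[ℝ] ℝ}
    (hJ' : ∀ x ∈ U, HasFDerivAt J (J' x) x) (hJ'' : ∀ x ∈ U, HasFDerivAt J' (J'' x) x)
    {x h : X} (hseg : ∀ t ∈ Icc (0:ℝ) 1, x + t • h ∈ U) {m : ℝ}
    (hm : ∀ t ∈ Ioo (0:ℝ) 1, m ≤ J'' (x + t • h) h h) :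
    J x + J' x h + m / 2 ≤ J (x + h) := by
  have hJ'h : ∀ y ∈ U, HasFDerivAt (fun y => J' y h)
      ((ContinuousLinearMap.apply ℝ ℝ h).comp (J'' y)) y :=
    fun y hy => (ContinuousLinearMap.apply ℝ ℝ h).hasFDerivAt.comp y (hJ'' y hy)
  have htaylor := add_deriv_mul_add_le_of_le_deriv2 zero_le_one
    (g := fun t => J (x + t • h)) (g'' := fun t => J'' (x + t • h) h h)
    (fun t ht => (hJ' _ (hseg t ht)).hasDerivAt_add_smul.hasDerivWithinAt)
    (fun t ht => (hJ'h _ (hseg t ht)).hasDerivAt_add_smul.hasDerivWithinAt) hm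
  simpa only [zero_smul, add_zero, one_smul, sub_zero, mul_one, one_pow] using htaylor

theorem sub_mul_sq_le_apply_apply {X : Type*} [NormedAddCommGroup X] [NormedSpace ℝ X]
    {A B : X →L[ℝ] X →L[ℝ] ℝ} {c : ℝ} (hAB : ‖A - B‖ ≤ c) (h : X) :
    B h h - c * ‖h‖ ^ 2 ≤ A h h := by
  have hbound : |(A - B) h h| ≤ c * ‖h‖ ^ 2 :=
    calc |(A - B) h h| ≤ ‖A - B‖ * ‖h‖ * ‖h‖ := (A - B).le_opNorm₂ h h
      _ ≤ c * ‖h‖ * ‖h‖ := by gcongr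
      _ = c * ‖h‖ ^ 2 := by ring
  have hlower := (abs_le.1 hbound).1
  rw [sub_apply, sub_apply] at hlower
  linarith

theorem exists_pos_mul_rpow_le_mul_rpow {α β C ε : ℝ} (hε : 0 < ε) (hC : 0 ≤ C) (hβ : 0 < β)
    (hαβ : α < β) : ∃ δ > 0, ∀ r, 0 ≤ r → r < δ → C * r ^ β ≤ ε * r ^ α := by
  have hq : 0 < β - α := sub_pos.2 hαβ
  refine ⟨(ε / (C + 1)) ^ (β - α)⁻¹, by positivity, fun r hr hrδ => ?_⟩
  have hsmall : r ^ (β - α) ≤ ε / (C + 1) := by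
    calc r ^ (β - α) ≤ ((ε / (C + 1)) ^ (β - α)⁻¹) ^ (β - α) :=
          Real.rpow_le_rpow hr hrδ.le hq.le
      _ = ε / (C + 1) := Real.rpow_inv_rpow (by positivity) hq.ne'
  have hsplit : r ^ β = r ^ α * r ^ (β - α) := by
    rw [← Real.rpow_add' hr (by linarith), add_sub_cancel]
  have hCε : C * (ε / (C + 1)) ≤ ε := by
    rw [mul_div_assoc', div_le_iff₀ (by linarith)]
    nlinarith
  calc C * r ^ β = C * r ^ (β - α) * r ^ α := by rw [hsplit]; ring
    _ ≤ C * (ε / (C + 1)) * r ^ α := by gcongr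
    _ ≤ ε * r ^ α := by gcongr

theorem second_order_sufficient_condition_general
    {X : Type*} [NormedAddCommGroup X] [NormedSpace ℝ X]
    (U : Set X) (K : Set X) (hK : Convex ℝ K) (hKU : K ⊆ U)
    (Bbar : X) (hBbar : Bbar ∈ K)
    (J : X → ℝ) (J' : X → X →L[ℝ] ℝ) (J'' : X → X →L[ℝ] X →L[ℝ] ℝ)
    (hJ' : ∀ x ∈ U, HasFDerivAt J (J' x) x)
    (hJ'' : ∀ x ∈ U, HasFDerivAt J' (J'' x) x)
    (ε C γ α : ℝ) (hε : 0 < ε) (hC : 0 ≤ C) (hγ : 0 < γ)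
    (hα' : α < 2 + γ)
    (h1 : ∀ B ∈ K, 0 ≤ J' Bbar (B - Bbar))
    (h2 : ∀ B ∈ K, ε * ‖B - Bbar‖ ^ α ≤ J'' Bbar (B - Bbar) (B - Bbar))
    (h3 : ∀ B ∈ K, ∀ θ ∈ Icc (0:ℝ) 1,
      ‖J'' (Bbar + θ • (B - Bbar)) - J'' Bbar‖ ≤ C * ‖θ • (B - Bbar)‖ ^ γ) :
    ∃ δ > (0:ℝ), ∀ B ∈ K, ‖B - Bbar‖ < δ →
      J Bbar + ε / 4 * ‖B - Bbar‖ ^ α ≤ J B := by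
  obtain ⟨δ, hδ, hsmall⟩ :=
    exists_pos_mul_rpow_le_mul_rpow (half_pos hε) hC (by linarith : (0:ℝ) < 2 + γ) hα'
  refine ⟨δ, hδ, fun B hB hBδ => ?_⟩
  set h := B - Bbar
  have hseg : ∀ t ∈ Icc (0:ℝ) 1, Bbar + t • h ∈ U :=
    fun t ht => hKU (hK.add_smul_sub_mem hBbar hB ht)
  have hcurv : ∀ t ∈ Icc (0:ℝ) 1,
      ε * ‖h‖ ^ α - C * ‖h‖ ^ (2 + γ) ≤ J'' (Bbar + t • h) h h := by
    intro t ht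
    have hth : ‖t • h‖ ≤ ‖h‖ := by
      rw [norm_smul, Real.norm_of_nonneg ht.1]
      exact mul_le_of_le_one_left (norm_nonneg h) ht.2
    have hnorm : ‖J'' (Bbar + t • h) - J'' Bbar‖ ≤ C * ‖h‖ ^ γ :=
      (h3 B hB t ht).trans (by gcongr)
    have hpow : ‖h‖ ^ (2 + γ) = ‖h‖ ^ γ * ‖h‖ ^ 2 := by
      rw [Real.rpow_add' (norm_nonneg h) (by linarith), Real.rpow_two, mul_comm]
    have hdev := sub_mul_sq_le_apply_apply hnorm h
    rw [hpow]
    linarith [h2 B hB]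
  have htaylor := add_fderiv_add_le_of_le_fderiv2 hJ' hJ'' hseg
    (fun t ht => hcurv t (Ioo_subset_Icc_self ht))
  rw [add_sub_cancel] at htaylor
  linarith [h1 B hB, hsmall ‖h‖ (norm_nonneg h) hBδ]

/-- abstract second-order sufficient optimality condition with
quadratic-type growth `J(B) ≥ J(B̄) + (ε/4)‖B − B̄‖^α`. -/
theorem second_order_sufficient_condition
    {X : Type*} [NormedAddCommGroup X] [NormedSpace ℝ X]
    (U : Set X) (hU : IsOpen U) (K : Set X) (hK : Convex ℝ K) (hKU : K ⊆ U)
    (Bbar : X) (hBbar : Bbar ∈ K)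
    (J : X → ℝ) (J' : X → X →L[ℝ] ℝ) (J'' : X → X →L[ℝ] X →L[ℝ] ℝ)
    (hJ' : ∀ x ∈ U, HasFDerivAt J (J' x) x)
    (hJ'' : ∀ x ∈ U, HasFDerivAt J' (J'' x) x)
    (hJ''cont : ContinuousOn J'' U)
    (ε C γ α : ℝ) (hε : 0 < ε) (hC : 0 ≤ C) (hγ : 0 < γ)
    (hα : 0 < α) (hα' : α < 2 + γ)
    (h1 : ∀ B ∈ K, 0 ≤ J' Bbar (B - Bbar))
    (h2 : ∀ B ∈ K, ε * ‖B - Bbar‖ ^ α ≤ J'' Bbar (B - Bbar) (B - Bbar))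
    (h3 : ∀ B ∈ K, ∀ θ ∈ Icc (0:ℝ) 1,
      ‖J'' (Bbar + θ • (B - Bbar)) - J'' Bbar‖ ≤ C * ‖θ • (B - Bbar)‖ ^ γ) :
    ∃ δ > (0:ℝ), ∀ B ∈ K, ‖B - Bbar‖ < δ →
      J Bbar + ε / 4 * ‖B - Bbar‖ ^ α ≤ J B :=
  second_order_sufficient_condition_general U K hK hKU Bbar hBbar J J' J'' hJ' hJ'' ε C γ α hε hC hγ
    hα' h1 h2 h3

end
end
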